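/- Let 1 < p < ∞, 0 < κ < 1, let (X, d, μ) be a space of homogeneous type and v ∈ A_p(X) with the regularity property v(E)/v(B) ≤ C(μ(E)/μ(B))^σ and (μ(E)/μ(B))^p ≤ C' v(E)/v(B) for E ⊆ B. Suppose F ⊆ B̃ is measurable with μ(F) ≥ μ(B̃)/4. Then the function f = v(B̃)^{(κ−1)/p} χ_F satisfies c₁ ≤ ‖f‖_{L_v^{p,κ}(X)} ≤ c₂ for constants c₁, c₂ > 0 depending only on C, C', σ, p, κ, where ‖f‖_{L_v^{p,κ}} = sup_B ( v(B)^{-κ} ∫_B |f|^p v dμ )^{1/p}. -/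

import Mathlib

/-!
Since `f = v(B̃)^{(κ-1)/p} χ_F`, the Morrey quotient over a ball `B` is
`v(B̃)^{κ-1} v(F ∩ B) / v(B)^κ`. Splitting `v(F ∩ B) = v(F ∩ B)^{1-κ} v(F ∩ B)^κ` and using
`v(F ∩ B) ≤ v(B̃)` and `v(F ∩ B) ≤ v(B)` bounds it by `1`. At `B = B̃` it equals `v(F) / v(B̃)`,
which the reverse regularity inequality and `μ(F) ≥ μ(B̃)/4` bound below by `4^{-p} / C'`.
-/

open MeasureTheory Metric ENNReal

/-- The weighted Morrey "norm" `sup_B ( v(B)^{-κ} ∫_B |f|^p v dμ )^{1/p}`. -/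
noncomputable def morreyNorm {X : Type*} [MetricSpace X] [MeasurableSpace X]
    (μ : MeasureTheory.Measure X) (v : X → ℝ) (p κ : ℝ) (f : X → ℝ) : ℝ≥0∞ :=
  ⨆ (x : X) (r : ℝ) (_ : 0 < r),
    ((∫⁻ y in ball x r, (‖f y‖₊ : ℝ≥0∞) ^ p * ENNReal.ofReal (v y) ∂μ) /
      (∫⁻ y in ball x r, ENNReal.ofReal (v y) ∂μ) ^ κ) ^ (1 / p)

namespace ENNReal

lemma inv_le_div_of_le_mul {a b c : ℝ≥0∞} (hc0 : c ≠ 0) (hcT : c ≠ ⊤) (ha0 : a ≠ 0)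
    (haT : a ≠ ⊤) (h : a ≤ c * b) : c⁻¹ ≤ b / a := by
  rw [ENNReal.le_div_iff_mul_le (Or.inl ha0) (Or.inl haT)]
  calc c⁻¹ * a ≤ c⁻¹ * (c * b) := by gcongr
    _ = b := by rw [← mul_assoc, ENNReal.inv_mul_cancel hc0 hcT, one_mul]

lemma rpow_sub_one_mul_div_rpow {V : ℝ≥0∞} (b : ℝ≥0∞) (κ : ℝ) (hV0 : V ≠ 0) (hVT : V ≠ ⊤) :
    V ^ (κ - 1) * b / V ^ κ = b / V :=
  calc V ^ (κ - 1) * b / V ^ κ = V ^ κ * (V ^ κ)⁻¹ * (b / V) := by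
        rw [rpow_sub _ _ hV0 hVT, rpow_one]; simp only [div_eq_mul_inv]; ring
    _ = b / V := by
        rw [ENNReal.mul_inv_cancel (rpow_pos (pos_iff_ne_zero.2 hV0) hVT).ne'
          (rpow_ne_top_of_ne_zero hV0 hVT), one_mul]

lemma rpow_sub_one_mul_le_rpow {V a b : ℝ≥0∞} {κ : ℝ} (hV0 : V ≠ 0) (hVT : V ≠ ⊤)
    (hκ0 : 0 ≤ κ) (hκ1 : κ ≤ 1) (hbV : b ≤ V) (hba : b ≤ a) : V ^ (κ - 1) * b ≤ a ^ κ :=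
  calc V ^ (κ - 1) * b = V ^ (κ - 1) * (b ^ (1 - κ) * b ^ κ) := by
        rw [← rpow_add_of_nonneg _ _ (by linarith) hκ0]; norm_num
    _ ≤ V ^ (κ - 1) * (V ^ (1 - κ) * a ^ κ) :=
        mul_le_mul_right (mul_le_mul' (rpow_le_rpow hbV (by linarith)) (rpow_le_rpow hba hκ0)) _
    _ = a ^ κ := by rw [← mul_assoc, ← rpow_add _ _ hV0 hVT]; norm_num

lemma ofReal_toReal_rpow_div_rpow {V : ℝ≥0∞} (hV0 : V ≠ 0) (hVT : V ≠ ⊤) (q : ℝ) {p : ℝ}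
    (hp : p ≠ 0) : ENNReal.ofReal (V.toReal ^ (q / p)) ^ p = V ^ q := by
  rw [toReal_rpow, ofReal_toReal (rpow_ne_top_of_ne_zero hV0 hVT), ← rpow_mul,
    div_mul_cancel₀ _ hp]

end ENNReal

section

variable {X : Type*} [MeasurableSpace X] (μ : Measure X)

/-- In `ℝ≥0∞`, `⊤ / ⊤ = 0`, so a regularity inequality tested on `s` itself excludes `μ s = ⊤`. -/
lemma measure_ne_top_of_setLIntegral_le {s : Set X} {f : X → ℝ≥0∞} {c : ℝ≥0∞} {σ : ℝ}
    (hσ : 0 < σ) (h0 : ∫⁻ y in s, f y ∂μ ≠ 0)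
    (h : ∫⁻ y in s, f y ∂μ ≤ c * (μ s / μ s) ^ σ * ∫⁻ y in s, f y ∂μ) : μ s ≠ ⊤ := by
  intro htop
  rw [htop, ENNReal.div_top, zero_rpow_of_pos hσ, mul_zero, zero_mul] at h
  exact h0 (nonpos_iff_eq_zero.1 h)

lemma setLIntegral_enorm_const_mul_indicator_rpow {p a : ℝ} (hp : 0 < p) (ha : 0 ≤ a)
    {F : Set X} (hF : MeasurableSet F) (s : Set X) (w : X → ℝ≥0∞) :
    ∫⁻ y in s, (‖a * F.indicator (fun _ => (1 : ℝ)) y‖₊ : ℝ≥0∞) ^ p * w y ∂μ =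
      ENNReal.ofReal a ^ p * ∫⁻ y in F ∩ s, w y ∂μ := by
  have hpt : ∀ y, (‖a * F.indicator (fun _ => (1 : ℝ)) y‖₊ : ℝ≥0∞) ^ p * w y =
      F.indicator (fun y => ENNReal.ofReal a ^ p * w y) y := by
    intro y
    by_cases hy : y ∈ F
    · simp [hy, ← enorm_eq_nnnorm, Real.enorm_eq_ofReal ha]
    · simp [hy, zero_rpow_of_pos hp]
  simp_rw [hpt]
  rw [lintegral_indicator hF, Measure.restrict_restrict hF,
    lintegral_const_mul' _ _ (rpow_ne_top_of_nonneg hp.le ofReal_ne_top)]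

end

lemma morreyNorm_const_mul_indicator {X : Type*} [MetricSpace X] [MeasurableSpace X]
    (μ : Measure X) (v : X → ℝ) {p a : ℝ} (κ : ℝ) (hp : 0 < p) (ha : 0 ≤ a) {F : Set X}
    (hF : MeasurableSet F) :
    morreyNorm μ v p κ (fun z => a * F.indicator (fun _ => (1 : ℝ)) z) =
      ⨆ (x : X) (r : ℝ) (_ : 0 < r),
        (ENNReal.ofReal a ^ p * (∫⁻ y in F ∩ ball x r, ENNReal.ofReal (v y) ∂μ) /
          (∫⁻ y in ball x r, ENNReal.ofReal (v y) ∂μ) ^ κ) ^ (1 / p) := by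
  simp only [morreyNorm, setLIntegral_enorm_const_mul_indicator_rpow μ hp ha hF]

theorem stmt14_general {X : Type*} [MetricSpace X] [MeasurableSpace X] [BorelSpace X]
    (μ : Measure X)
    (p κ : ℝ) (hp : 1 < p) (hκ0 : 0 < κ) (hκ1 : κ < 1)
    (v : X → ℝ)
    (hvB : ∀ (x : X) (r : ℝ), 0 < r →
      0 < ∫⁻ y in ball x r, ENNReal.ofReal (v y) ∂μ ∧
        ∫⁻ y in ball x r, ENNReal.ofReal (v y) ∂μ < ⊤)
    (C C' σ : ℝ) (hC' : 0 < C') (hσ : 0 < σ)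
    (hreg : ∀ (x : X) (r : ℝ), 0 < r → ∀ E ⊆ ball x r, MeasurableSet E →
      ∫⁻ y in E, ENNReal.ofReal (v y) ∂μ ≤
        ENNReal.ofReal C * (μ E / μ (ball x r)) ^ σ *
          ∫⁻ y in ball x r, ENNReal.ofReal (v y) ∂μ)
    (hrev : ∀ (x : X) (r : ℝ), 0 < r → ∀ E ⊆ ball x r, MeasurableSet E →
      (μ E / μ (ball x r)) ^ p ≤
        ENNReal.ofReal C' * ((∫⁻ y in E, ENNReal.ofReal (v y) ∂μ) /
          ∫⁻ y in ball x r, ENNReal.ofReal (v y) ∂μ)) :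
    ∃ c₁ > (0 : ℝ), ∃ c₂ > (0 : ℝ), ∀ (w₀ : X) (r₀ : ℝ), 0 < r₀ →
      ∀ F ⊆ ball w₀ r₀, MeasurableSet F → μ (ball w₀ r₀) ≤ 4 * μ F →
        ENNReal.ofReal c₁ ≤
          morreyNorm μ v p κ (fun z =>
            (∫⁻ y in ball w₀ r₀, ENNReal.ofReal (v y) ∂μ).toReal ^ ((κ - 1) / p) *
              F.indicator (fun _ => (1 : ℝ)) z) ∧
        morreyNorm μ v p κ (fun z =>
            (∫⁻ y in ball w₀ r₀, ENNReal.ofReal (v y) ∂μ).toReal ^ ((κ - 1) / p) *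
              F.indicator (fun _ => (1 : ℝ)) z) ≤ ENNReal.ofReal c₂ := by
  have hp0 : 0 < p := by linarith
  set c : ℝ≥0∞ := ((4 : ℝ≥0∞)⁻¹ ^ p / ENNReal.ofReal C') ^ (1 / p)
  have hc0 : c ≠ 0 := by
    simp [c, rpow_eq_zero_iff, div_eq_zero_iff, hp0, hp0.le, ofReal_ne_top]
  have hcT : c ≠ ⊤ := by
    simp [c, rpow_eq_top_iff, div_eq_top, hp0, hC']
  refine ⟨c.toReal, toReal_pos hc0 hcT, 1, one_pos, fun w₀ r₀ hr₀ F hF hFm hμF => ?_⟩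
  obtain ⟨hV0, hVT⟩ := hvB w₀ r₀ hr₀
  have hμB0 : μ (ball w₀ r₀) ≠ 0 := fun h => hV0.ne' (setLIntegral_measure_zero _ _ h)
  have hμBT : μ (ball w₀ r₀) ≠ ⊤ := measure_ne_top_of_setLIntegral_le μ hσ hV0.ne'
    (hreg w₀ r₀ hr₀ _ subset_rfl measurableSet_ball)
  rw [morreyNorm_const_mul_indicator μ v κ hp0 (Real.rpow_nonneg toReal_nonneg _) hFm,
    ofReal_toReal_rpow_div_rpow hV0.ne' hVT.ne _ hp0.ne', ofReal_toReal hcT, ofReal_one]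
  refine ⟨le_iSup₂_of_le w₀ r₀ (le_iSup_of_le hr₀ ?_), iSup₂_le fun x r => iSup_le fun _ => ?_⟩
  · have hquarter : (4 : ℝ≥0∞)⁻¹ ≤ μ F / μ (ball w₀ r₀) :=
      inv_le_div_of_le_mul (by norm_num) (by norm_num) hμB0 hμBT hμF
    rw [Set.inter_eq_left.2 hF, rpow_sub_one_mul_div_rpow _ _ hV0.ne' hVT.ne]
    exact rpow_le_rpow (div_le_of_le_mul' ((rpow_le_rpow hquarter hp0.le).trans
      (hrev w₀ r₀ hr₀ F hF hFm))) (by positivity)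
  · refine rpow_le_one (div_le_of_le_mul ?_) (by positivity)
    rw [one_mul]
    exact rpow_sub_one_mul_le_rpow hV0.ne' hVT.ne hκ0.le hκ1.le
      (lintegral_mono_set (Set.inter_subset_left.trans hF))
      (lintegral_mono_set Set.inter_subset_right)

/-- Normalized indicator test functions: if `v` has the `A_p`-type regularity and reverse
regularity properties, and `F ⊆ B̃` has `μ(F) ≥ μ(B̃)/4`, then
`f = v(B̃)^{(κ-1)/p} χ_F` satisfies `c₁ ≤ ‖f‖_{L_v^{p,κ}} ≤ c₂` for constants
`c₁, c₂ > 0` independent of `B̃` and `F`. -/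
theorem stmt14 {X : Type*} [MetricSpace X] [MeasurableSpace X] [BorelSpace X]
    (μ : Measure X) [IsUnifLocDoublingMeasure μ]
    (p κ : ℝ) (hp : 1 < p) (hκ0 : 0 < κ) (hκ1 : κ < 1)
    (v : X → ℝ) (hv0 : ∀ x, 0 ≤ v x) (hvloc : LocallyIntegrable v μ)
    (hvB : ∀ (x : X) (r : ℝ), 0 < r →
      0 < ∫⁻ y in ball x r, ENNReal.ofReal (v y) ∂μ ∧
        ∫⁻ y in ball x r, ENNReal.ofReal (v y) ∂μ < ⊤)
    (C C' σ : ℝ) (hC : 0 < C) (hC' : 0 < C') (hσ : 0 < σ)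
    (hreg : ∀ (x : X) (r : ℝ), 0 < r → ∀ E ⊆ ball x r, MeasurableSet E →
      ∫⁻ y in E, ENNReal.ofReal (v y) ∂μ ≤
        ENNReal.ofReal C * (μ E / μ (ball x r)) ^ σ *
          ∫⁻ y in ball x r, ENNReal.ofReal (v y) ∂μ)
    (hrev : ∀ (x : X) (r : ℝ), 0 < r → ∀ E ⊆ ball x r, MeasurableSet E →
      (μ E / μ (ball x r)) ^ p ≤
        ENNReal.ofReal C' * ((∫⁻ y in E, ENNReal.ofReal (v y) ∂μ) /
          ∫⁻ y in ball x r, ENNReal.ofReal (v y) ∂μ)) :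
    ∃ c₁ > (0 : ℝ), ∃ c₂ > (0 : ℝ), ∀ (w₀ : X) (r₀ : ℝ), 0 < r₀ →
      ∀ F ⊆ ball w₀ r₀, MeasurableSet F → μ (ball w₀ r₀) ≤ 4 * μ F →
        ENNReal.ofReal c₁ ≤
          morreyNorm μ v p κ (fun z =>
            (∫⁻ y in ball w₀ r₀, ENNReal.ofReal (v y) ∂μ).toReal ^ ((κ - 1) / p) *
              F.indicator (fun _ => (1 : ℝ)) z) ∧
        morreyNorm μ v p κ (fun z =>
            (∫⁻ y in ball w₀ r₀, ENNReal.ofReal (v y) ∂μ).toReal ^ ((κ - 1) / p) *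
              F.indicator (fun _ => (1 : ℝ)) z) ≤ ENNReal.ofReal c₂ :=
  stmt14_general μ p κ hp hκ0 hκ1 v hvB C C' σ hC' hσ hreg hrev
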